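/- arXiv:1411.1459 — 2 statements merged into one kernel-verified Lean document; each statement's English description precedes it below -/
import Mathlib

section
/- If J* ≥ 0, then a stationary policy μ is optimal (i.e., J_μ = J*) if and only if J* = T_μ(J*). -/
/-!
Common framework: countable-state/countable-control total-cost MDPs under the
General Convergence (GC) condition, following H. Yu, "On Convergence of Value
Iteration for a Class of Total Cost Markov Decision Processes".

States `S` and controls `C` are countable types; `U x` is the nonempty set of
feasible controls at `x`; `g x u ∈ (-∞, +∞]` is the one-stage cost (an `EReal`
that is never `⊥` on feasible pairs); `q x u x'` are transition probabilities.

A policy is represented by its conditional control distributions given the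
(reversed) history of past (state, control) pairs and the current state.
Expectations are computed by explicit countable sums, splitting every
extended-real quantity into its positive and negative parts (computed in
`ℝ≥0∞`) and recombining with the convention `∞ - ∞ = ∞`.
-/

open scoped ENNReal Classical
open Filter

noncomputable section

namespace GCMDP

/-- The positive part of an extended real, as an element of `ℝ≥0∞`. -/
def ePos (a : EReal) : ℝ≥0∞ := if a = ⊤ then ⊤ else ENNReal.ofReal a.toReal

/-- Recombine a positive part `P` and a negative part `N` into an extended real,
with the convention `∞ - ∞ = ∞`. -/
def signedSum (P N : ℝ≥0∞) : EReal := if P = ⊤ then ⊤ else (P : EReal) - (N : EReal)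

variable {S C : Type}

/-- A (randomized, history-dependent) policy: to each reversed list of past
(state, control) pairs and each current state it assigns a mass function on
controls. -/
def Policy (S C : Type) : Type := List (S × C) → S → C → ℝ≥0∞

/-- A policy is valid for the control constraint `U` if each of its conditional
distributions is a probability distribution concentrated on the feasible set. -/
def IsPolicy (U : S → Set C) (π : Policy S C) : Prop :=
  ∀ (h : List (S × C)) (x : S), (∑' u : C, π h x u) = 1 ∧ ∀ u : C, π h x u ≠ 0 → u ∈ U x

/-- A policy is nonrandomized if each of its conditional distributions is a
point mass. -/
def Nonrandomized (π : Policy S C) : Prop :=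
  ∀ (h : List (S × C)) (x : S), ∃ u : C, ∀ u' : C, π h x u' = if u' = u then 1 else 0

/-- The initial state recorded in a reversed history `h` with current state `x`. -/
def initOf (h : List (S × C)) (x : S) : S := ((h.getLast?).map Prod.fst).getD x

/-- A policy is semi-Markov if its decision at time `k` depends on the history
only through the time `k`, the initial state and the current state. -/
def IsSemiMarkov (π : Policy S C) : Prop :=
  ∀ (h h' : List (S × C)) (x : S), h.length = h'.length → initOf h x = initOf h' x →
    π h x = π h' x

/-- A policy is Markov if its decision at time `k` depends on the history only
through the time `k` and the current state. -/
def IsMarkov (π : Policy S C) : Prop :=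
  ∀ (h h' : List (S × C)) (x : S), h.length = h'.length → π h x = π h' x

/-- A policy is stationary if its decision depends only on the current state. -/
def IsStationary (π : Policy S C) : Prop :=
  ∀ (h h' : List (S × C)) (x : S), π h x = π h' x

/-- The stationary policy determined by a one-step decision rule `μ`. -/
def toPolicy (μ : S → C → ℝ≥0∞) : Policy S C := fun _ x u => μ x u

/-- Probability that, starting from `x₀` and following policy `π`, the first
transitions produce the reversed history `h` and current state `y`. -/
def histProb (q : S → C → S → ℝ≥0∞) (π : Policy S C) (x₀ : S) :
    List (S × C) → S → ℝ≥0∞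
  | [], y => if y = x₀ then 1 else 0
  | (z, u) :: h, y => histProb q π x₀ h z * π h z u * q z u y

/-- Marginal distribution of the state `x_n` at time `n` under policy `π`
started at `x₀`. -/
def sDist (q : S → C → S → ℝ≥0∞) (π : Policy S C) (x₀ : S) (n : ℕ) (y : S) : ℝ≥0∞ :=
  ∑' h : {l : List (S × C) // l.length = n}, histProb q π x₀ h.1 y

/-- Joint distribution of the state-control pair `(x_n, u_n)` at time `n`. -/
def saDist (q : S → C → S → ℝ≥0∞) (π : Policy S C) (x₀ : S) (n : ℕ) (y : S) (u : C) : ℝ≥0∞ :=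
  ∑' h : {l : List (S × C) // l.length = n}, histProb q π x₀ h.1 y * π h.1 y u

/-- Expectation `E^π_{x₀}[f(x_n, u_n)]` of a nonnegative cost. -/
def costAt (q : S → C → S → ℝ≥0∞) (π : Policy S C) (x₀ : S) (n : ℕ)
    (f : S → C → ℝ≥0∞) : ℝ≥0∞ :=
  ∑' y : S, ∑' u : C, saDist q π x₀ n y u * f y u

/-- Positive part `g₊` of the one-stage cost. -/
def gPos (g : S → C → EReal) (x : S) (u : C) : ℝ≥0∞ := ePos (g x u)

/-- Negative part `g₋` of the one-stage cost. -/
def gNeg (g : S → C → EReal) (x : S) (u : C) : ℝ≥0∞ := ePos (-(g x u))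

/-- `J_π^+(x) = E^π_x[∑_k g₊(x_k,u_k)]`. -/
def Jplus (q : S → C → S → ℝ≥0∞) (g : S → C → EReal) (π : Policy S C) (x : S) : ℝ≥0∞ :=
  ∑' n : ℕ, costAt q π x n (gPos g)

/-- `J_π^-(x) = E^π_x[∑_k g₋(x_k,u_k)]`. -/
def Jminus (q : S → C → S → ℝ≥0∞) (g : S → C → EReal) (π : Policy S C) (x : S) : ℝ≥0∞ :=
  ∑' n : ℕ, costAt q π x n (gNeg g)

/-- The total cost `J_π(x) = J_π^+(x) - J_π^-(x)` of a policy. -/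
def Jpol (q : S → C → S → ℝ≥0∞) (g : S → C → EReal) (π : Policy S C) (x : S) : EReal :=
  signedSum (Jplus q g π x) (Jminus q g π x)

/-- The general convergence (GC) condition: `sup_π J_π^-(x) < ∞` for all `x`. -/
def GC (U : S → Set C) (q : S → C → S → ℝ≥0∞) (g : S → C → EReal) : Prop :=
  ∀ x : S, (⨆ π ∈ {π' : Policy S C | IsPolicy U π'}, Jminus q g π x) ≠ ⊤

/-- The optimal cost function `J*(x) = inf_π J_π(x)`. -/
def Jstar (U : S → Set C) (q : S → C → S → ℝ≥0∞) (g : S → C → EReal) (x : S) : EReal :=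
  ⨅ π ∈ {π' : Policy S C | IsPolicy U π'}, Jpol q g π x

/-- `J^{*+}(x) = inf_π J_π^+(x)`. -/
def JstarPlus (U : S → Set C) (q : S → C → S → ℝ≥0∞) (g : S → C → EReal) (x : S) : ℝ≥0∞ :=
  ⨅ π ∈ {π' : Policy S C | IsPolicy U π'}, Jplus q g π x

/-- `J^{*-}(x) = inf_π J_π^-(x)`. -/
def JstarMinus (U : S → Set C) (q : S → C → S → ℝ≥0∞) (g : S → C → EReal) (x : S) : ℝ≥0∞ :=
  ⨅ π ∈ {π' : Policy S C | IsPolicy U π'}, Jminus q g π x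

/-- The general one-stage dynamic programming operator with one-stage cost `c`:
`(opT c J)(x) = inf_{u ∈ U(x)} { c(x,u) + ∑_{x'} J(x') q(x'|x,u) }`, where the
bracket is evaluated by separating positive and negative parts, with the
convention `∞ - ∞ = ∞`. -/
def opT (U : S → Set C) (q : S → C → S → ℝ≥0∞) (c : S → C → EReal)
    (J : S → EReal) (x : S) : EReal :=
  ⨅ u ∈ U x,
    signedSum (ePos (c x u) + ∑' x' : S, q x u x' * ePos (J x'))
      (ePos (-(c x u)) + ∑' x' : S, q x u x' * ePos (-(J x')))

/-- The dynamic programming operator `T` of the total cost problem. -/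
def Top (U : S → Set C) (q : S → C → S → ℝ≥0∞) (g : S → C → EReal) :
    (S → EReal) → S → EReal :=
  opT U q g

/-- The operator `T₊` associated with the positive part `g₊` of the cost. -/
def TopPlus (U : S → Set C) (q : S → C → S → ℝ≥0∞) (g : S → C → EReal) :
    (S → EReal) → S → EReal :=
  opT U q (fun x u => max (g x u) 0)

/-- The operator `T₋` associated with the (negated) negative part `-g₋` of the cost. -/
def TopMinus (U : S → Set C) (q : S → C → S → ℝ≥0∞) (g : S → C → EReal) :
    (S → EReal) → S → EReal :=
  opT U q (fun x u => min (g x u) 0)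

/-- The cost-free operator `T₀`. -/
def TopZero (U : S → Set C) (q : S → C → S → ℝ≥0∞) :
    (S → EReal) → S → EReal :=
  opT U q (fun _ _ => 0)

/-- The monotone-increasing modification `T̃(J) = max{J, T(J)}` of `T`. -/
def Ttil (U : S → Set C) (q : S → C → S → ℝ≥0∞) (g : S → C → EReal)
    (J : S → EReal) (x : S) : EReal :=
  max (J x) (Top U q g J x)

/-- The operator `T_μ` associated with a stationary decision rule `μ`. -/
def Tmu (q : S → C → S → ℝ≥0∞) (g : S → C → EReal) (μ : S → C → ℝ≥0∞)
    (J : S → EReal) (x : S) : EReal :=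
  signedSum (∑' u : C, μ x u * (ePos (g x u) + ∑' x' : S, q x u x' * ePos (J x')))
    (∑' u : C, μ x u * (ePos (-(g x u)) + ∑' x' : S, q x u x' * ePos (-(J x'))))

/-- Expectation `E^π_{x₀}[J(x_n)]` of an extended-real function of the state at
time `n` (positive and negative parts combined with the convention `∞-∞=∞`). -/
def expState (q : S → C → S → ℝ≥0∞) (π : Policy S C) (x₀ : S) (n : ℕ)
    (J : S → EReal) : EReal :=
  signedSum (∑' y : S, sDist q π x₀ n y * ePos (J y))
    (∑' y : S, sDist q π x₀ n y * ePos (-(J y)))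

/-- The expected tail cost `E^π_{x₀}[∑_{k ≥ n} g(x_k, u_k)]`. -/
def tailCost (q : S → C → S → ℝ≥0∞) (g : S → C → EReal) (π : Policy S C)
    (x₀ : S) (n : ℕ) : EReal :=
  signedSum (∑' k : ℕ, costAt q π x₀ (n + k) (gPos g))
    (∑' k : ℕ, costAt q π x₀ (n + k) (gNeg g))

/-- Membership in the class `A₀(S)`: functions nowhere `-∞` such that
`inf_{n ≥ 1} T₀ⁿ(min{J, 0})` is nowhere `-∞`. -/
def MemA0 (U : S → Set C) (q : S → C → S → ℝ≥0∞) (J : S → EReal) : Prop :=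
  (∀ x : S, J x ≠ ⊥) ∧
    ∀ x : S, (⨅ n : ℕ, (TopZero U q)^[n + 1] (fun y => min (J y) 0) x) ≠ ⊥

/-!
Write `P = J_μ⁺` and `N = J_μ⁻`. Conditioning on the first transition gives
`P = E_μ[g₊ + P(x₁)]` and `N = E_μ[g₋ + N(x₁)]`; as `N` is finite (GC), removing the common part
`min P N` from both shows that `J_μ = P - N` is a fixed point of `T_μ`, so an optimal `μ` gives
`J* = T_μ J*`. Conversely, if `J* = T_μ J*` and `J* ≥ 0`, then `K = J*` satisfies
`E_μ[g₊ + K(x₁)] ≤ K + E_μ[g₋]`, and induction on the horizon `n` gives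
`∑_{k<n} E[g₊(x_k,u_k)] ≤ K + ∑_{k<n} E[g₋(x_k,u_k)]`. Letting `n → ∞` yields `J_μ ≤ J*`,
while `J* ≤ J_μ` by definition of `J*`.
-/

lemma ePos_eq_toENNReal (a : EReal) : ePos a = a.toENNReal := rfl

lemma coe_ePos {a : EReal} (ha : 0 ≤ a) : (ePos a : EReal) = a :=
  EReal.coe_toENNReal ha

lemma ePos_neg {a : EReal} (ha : 0 ≤ a) : ePos (-a) = 0 :=
  EReal.toENNReal_of_nonpos (EReal.neg_le_neg_iff.2 ha |>.trans_eq neg_zero)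

section SignedSum

variable {P N K : ℝ≥0∞}

lemma signedSum_of_ne_top (hP : P ≠ ⊤) : signedSum P N = (P : EReal) - N := if_neg hP

lemma ePos_signedSum_add_min : ePos (signedSum P N) + min P N = P := by
  rcases eq_or_ne P ⊤ with rfl | hP
  · simp [signedSum, ePos]
  · rw [signedSum_of_ne_top hP, ePos_eq_toENNReal,
      EReal.toENNReal_sub (EReal.coe_ennreal_nonneg N), EReal.toENNReal_coe,
      EReal.toENNReal_coe, tsub_add_min]

lemma ePos_neg_signedSum_add_min : ePos (-signedSum P N) + min P N = N := by
  rcases eq_or_ne P ⊤ with rfl | hP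
  · simp [signedSum, ePos_eq_toENNReal]
  · rw [signedSum_of_ne_top hP, EReal.neg_sub (by simp) (by simp [hP]), add_comm (-(P : EReal)),
      ← sub_eq_add_neg, ePos_eq_toENNReal, EReal.toENNReal_sub (EReal.coe_ennreal_nonneg P),
      EReal.toENNReal_coe, EReal.toENNReal_coe, min_comm, tsub_add_min]

lemma signedSum_add_add {D : ℝ≥0∞} (hD : D ≠ ⊤) :
    signedSum (P + D) (N + D) = signedSum P N := by
  rcases eq_or_ne P ⊤ with rfl | hP
  · simp [signedSum]
  rw [signedSum_of_ne_top hP, signedSum_of_ne_top (by simp [hP, hD])]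
  rcases eq_or_ne N ⊤ with rfl | hN
  · simp [EReal.sub_top]
  lift P to NNReal using hP
  lift N to NNReal using hN
  lift D to NNReal using hD
  simp only [← ENNReal.coe_add, EReal.coe_nnreal_eq_coe_real, NNReal.coe_add,
    ← EReal.coe_sub]
  congr 1
  ring

lemma le_add_of_signedSum_le (h : signedSum P N ≤ K) : P ≤ K + N := by
  rcases eq_or_ne P ⊤ with rfl | hP
  · simp_all [signedSum]
  · rw [signedSum_of_ne_top hP, EReal.sub_le_iff_le_add (by simp) (by simp)] at h
    exact_mod_cast h

lemma signedSum_le_of_le_add (hN : N ≠ ⊤) (h : P ≤ K + N) : signedSum P N ≤ K := by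
  rcases eq_or_ne P ⊤ with rfl | hP
  · simp_all [signedSum]
  · rw [signedSum_of_ne_top hP, EReal.sub_le_iff_le_add (by simp) (by simp)]
    exact_mod_cast h

end SignedSum

def consEquiv (A : Type) (n : ℕ) :
    A × {l : List A // l.length = n} ≃ {l : List A // l.length = n + 1} where
  toFun p := ⟨p.1 :: p.2.1, by simp [p.2.2]⟩
  invFun
    | ⟨a :: t, h⟩ => (a, ⟨t, by simpa using h⟩)
  left_inv _ := rfl
  right_inv
    | ⟨_ :: _, _⟩ => rfl

def meanCost (μ : S → C → ℝ≥0∞) (f : S → C → ℝ≥0∞) (x : S) : ℝ≥0∞ := ∑' u, μ x u * f x u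

def nextExp (q : S → C → S → ℝ≥0∞) (μ : S → C → ℝ≥0∞) (V : S → ℝ≥0∞) (x : S) : ℝ≥0∞ :=
  ∑' u, μ x u * ∑' x₁, q x u x₁ * V x₁

def stateExp (q : S → C → S → ℝ≥0∞) (μ : S → C → ℝ≥0∞) (n : ℕ) (V : S → ℝ≥0∞) (x : S) :
    ℝ≥0∞ :=
  ∑' y, sDist q (toPolicy μ) x n y * V y

section StationaryPolicy

variable {q : S → C → S → ℝ≥0∞} {μ : S → C → ℝ≥0∞}

lemma tsum_mul_add_eq_meanCost_add_nextExp (f : S → C → ℝ≥0∞) (V : S → ℝ≥0∞) (x : S) :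
    ∑' u, μ x u * (f x u + ∑' x₁, q x u x₁ * V x₁) = meanCost μ f x + nextExp q μ V x := by
  simp only [mul_add, ENNReal.tsum_add, meanCost, nextExp]

lemma nextExp_add (V W : S → ℝ≥0∞) (x : S) :
    nextExp q μ (fun y => V y + W y) x = nextExp q μ V x + nextExp q μ W x := by
  simp only [nextExp, mul_add, ENNReal.tsum_add]

lemma nextExp_mono {V W : S → ℝ≥0∞} (h : V ≤ W) (x : S) : nextExp q μ V x ≤ nextExp q μ W x := by
  unfold nextExp
  gcongr with u x₁
  exact h x₁

lemma nextExp_zero (x : S) : nextExp q μ (fun _ => 0) x = 0 := by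
  simp [nextExp]

lemma nextExp_tsum {ι : Type} (V : ι → S → ℝ≥0∞) (x : S) :
    nextExp q μ (fun y => ∑' i, V i y) x = ∑' i, nextExp q μ (V i) x := by
  simp only [nextExp, ← ENNReal.tsum_mul_left]
  conv_rhs => rw [ENNReal.tsum_comm]; enter [1, u]; rw [ENNReal.tsum_comm]

lemma nextExp_sum {ι : Type} (s : Finset ι) (V : ι → S → ℝ≥0∞) (x : S) :
    nextExp q μ (fun y => ∑ i ∈ s, V i y) x = ∑ i ∈ s, nextExp q μ (V i) x := by
  simp only [nextExp, Finset.mul_sum]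
  rw [← Summable.tsum_finsetSum fun _ _ => ENNReal.summable]
  refine tsum_congr fun u => ?_
  rw [← Finset.mul_sum, ← Summable.tsum_finsetSum fun _ _ => ENNReal.summable]

lemma sDist_zero (x y : S) : sDist q (toPolicy μ) x 0 y = if y = x then 1 else 0 := by
  rw [sDist, tsum_eq_single ⟨[], rfl⟩]
  · rfl
  · rintro ⟨l, hl⟩ hne
    exact absurd (Subtype.ext (List.length_eq_zero_iff.mp hl)) hne

lemma sDist_succ (x y : S) (n : ℕ) :
    sDist q (toPolicy μ) x (n + 1) y
      = ∑' z, sDist q (toPolicy μ) x n z * ∑' u, μ z u * q z u y := by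
  rw [sDist, ← (consEquiv _ n).tsum_eq, ENNReal.tsum_prod', ENNReal.tsum_prod']
  refine tsum_congr fun z => ?_
  rw [sDist, ← ENNReal.tsum_mul_left]
  refine tsum_congr fun u => ?_
  rw [← ENNReal.tsum_mul_right]
  exact tsum_congr fun t => mul_assoc _ _ _

lemma stateExp_zero (V : S → ℝ≥0∞) : stateExp q μ 0 V = V := by
  ext x
  simp only [stateExp, sDist_zero, ite_mul, one_mul, zero_mul, tsum_ite_eq]

lemma stateExp_succ (n : ℕ) (V : S → ℝ≥0∞) :
    stateExp q μ (n + 1) V = stateExp q μ n (nextExp q μ V) := by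
  ext x
  simp only [stateExp, nextExp, sDist_succ, ← ENNReal.tsum_mul_right, ← ENNReal.tsum_mul_left,
    mul_assoc]
  rw [ENNReal.tsum_comm]
  refine tsum_congr fun z => ?_
  rw [ENNReal.tsum_comm]

lemma stateExp_succ' (n : ℕ) (V : S → ℝ≥0∞) :
    stateExp q μ (n + 1) V = nextExp q μ (stateExp q μ n V) := by
  induction n generalizing V with
  | zero => rw [stateExp_succ, stateExp_zero, stateExp_zero]
  | succ n ih => rw [stateExp_succ, ih, ← stateExp_succ]

lemma costAt_eq_stateExp (x : S) (n : ℕ) (f : S → C → ℝ≥0∞) :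
    costAt q (toPolicy μ) x n f = stateExp q μ n (meanCost μ f) x := by
  simp only [costAt, saDist, stateExp, meanCost, sDist, toPolicy, ← ENNReal.tsum_mul_left,
    ← ENNReal.tsum_mul_right, mul_assoc]

lemma costAt_zero (x : S) (f : S → C → ℝ≥0∞) :
    costAt q (toPolicy μ) x 0 f = meanCost μ f x := by
  rw [costAt_eq_stateExp, stateExp_zero]

lemma costAt_succ (x : S) (n : ℕ) (f : S → C → ℝ≥0∞) :
    costAt q (toPolicy μ) x (n + 1) f = nextExp q μ (fun y => costAt q (toPolicy μ) y n f) x := by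
  simp only [costAt_eq_stateExp, stateExp_succ']

lemma tsum_costAt (x : S) (f : S → C → ℝ≥0∞) :
    ∑' n, costAt q (toPolicy μ) x n f
      = meanCost μ f x + nextExp q μ (fun y => ∑' n, costAt q (toPolicy μ) y n f) x := by
  rw [tsum_eq_zero_add' ENNReal.summable, costAt_zero, nextExp_tsum]
  simp only [costAt_succ]

lemma sum_range_succ_costAt (x : S) (n : ℕ) (f : S → C → ℝ≥0∞) :
    ∑ k ∈ Finset.range (n + 1), costAt q (toPolicy μ) x k f
      = meanCost μ f x
        + nextExp q μ (fun y => ∑ k ∈ Finset.range n, costAt q (toPolicy μ) y k f) x := by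
  rw [Finset.sum_range_succ', costAt_zero, nextExp_sum, add_comm]
  simp only [costAt_succ]

lemma sum_range_costAt_le {f h : S → C → ℝ≥0∞} {K : S → ℝ≥0∞}
    (hK : ∀ y, meanCost μ f y + nextExp q μ K y ≤ K y + meanCost μ h y) (n : ℕ) (x : S) :
    ∑ k ∈ Finset.range n, costAt q (toPolicy μ) x k f
      ≤ K x + ∑ k ∈ Finset.range n, costAt q (toPolicy μ) x k h := by
  induction n generalizing x with
  | zero => simp
  | succ n ih =>
    rw [sum_range_succ_costAt, sum_range_succ_costAt]
    set Hh := fun y => ∑ k ∈ Finset.range n, costAt q (toPolicy μ) y k h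
    calc _ ≤ meanCost μ f x + nextExp q μ (fun y => K y + Hh y) x :=
          add_le_add le_rfl (nextExp_mono ih x)
      _ = (meanCost μ f x + nextExp q μ K x) + nextExp q μ Hh x := by
          rw [nextExp_add, add_assoc]
      _ ≤ (K x + meanCost μ h x) + nextExp q μ Hh x := add_le_add (hK x) le_rfl
      _ = _ := add_assoc _ _ _

lemma tsum_costAt_le {f h : S → C → ℝ≥0∞} {K : S → ℝ≥0∞}
    (hK : ∀ y, meanCost μ f y + nextExp q μ K y ≤ K y + meanCost μ h y) (x : S) :
    ∑' n, costAt q (toPolicy μ) x n f ≤ K x + ∑' n, costAt q (toPolicy μ) x n h := by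
  rw [ENNReal.tsum_eq_iSup_nat]
  exact iSup_le fun n =>
    (sum_range_costAt_le hK n x).trans (add_le_add le_rfl (ENNReal.sum_le_tsum _))

lemma signedSum_eq_of_bellman {f h : S → C → ℝ≥0∞} {P N : S → ℝ≥0∞}
    (hP : ∀ y, P y = meanCost μ f y + nextExp q μ P y)
    (hN : ∀ y, N y = meanCost μ h y + nextExp q μ N y) {x : S} (hNx : N x ≠ ⊤) :
    signedSum (P x) (N x)
      = signedSum (meanCost μ f x + nextExp q μ (fun y => ePos (signedSum (P y) (N y))) x)
          (meanCost μ h x + nextExp q μ (fun y => ePos (-signedSum (P y) (N y))) x) := by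
  set m := fun y => min (P y) (N y)
  have hm : nextExp q μ m x ≠ ⊤ :=
    ne_top_of_le_ne_top hNx <| calc
      nextExp q μ m x ≤ nextExp q μ N x := nextExp_mono (fun y => min_le_right _ _) x
      _ ≤ N x := (hN x).ge.trans' le_add_self
  conv_rhs => rw [← signedSum_add_add hm, add_assoc, add_assoc, ← nextExp_add, ← nextExp_add]
  simp only [m, ePos_signedSum_add_min, ePos_neg_signedSum_add_min, ← hP, ← hN]

variable {g : S → C → EReal}

lemma Jplus_toPolicy (x : S) :
    Jplus q g (toPolicy μ) x = meanCost μ (gPos g) x + nextExp q μ (Jplus q g (toPolicy μ)) x :=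
  tsum_costAt x (gPos g)

lemma Jminus_toPolicy (x : S) :
    Jminus q g (toPolicy μ) x = meanCost μ (gNeg g) x + nextExp q μ (Jminus q g (toPolicy μ)) x :=
  tsum_costAt x (gNeg g)

lemma Tmu_eq (J : S → EReal) (x : S) :
    Tmu q g μ J x = signedSum (meanCost μ (gPos g) x + nextExp q μ (fun y => ePos (J y)) x)
      (meanCost μ (gNeg g) x + nextExp q μ (fun y => ePos (-J y)) x) :=
  congrArg₂ signedSum (tsum_mul_add_eq_meanCost_add_nextExp (gPos g) _ x) (tsum_mul_add_eq_meanCost_add_nextExp (gNeg g) _ x)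

lemma Tmu_Jpol {x : S} (hN : Jminus q g (toPolicy μ) x ≠ ⊤) :
    Tmu q g μ (Jpol q g (toPolicy μ)) x = Jpol q g (toPolicy μ) x := by
  rw [Tmu_eq]
  exact (signedSum_eq_of_bellman Jplus_toPolicy Jminus_toPolicy hN).symm

end StationaryPolicy

lemma Jminus_ne_top {U : S → Set C} {q : S → C → S → ℝ≥0∞} {g : S → C → EReal} (hGC : GC U q g)
    {π : Policy S C} (hπ : IsPolicy U π) (x : S) : Jminus q g π x ≠ ⊤ :=
  ne_top_of_le_ne_top (hGC x) (le_iSup₂ (f := fun π (_ : IsPolicy U π) => Jminus q g π x) π hπ)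

theorem stationary_optimal_iff_fixed_point_general {S C : Type}
    (U : S → Set C) (q : S → C → S → ℝ≥0∞) (g : S → C → EReal)
    (hGC : GC U q g)
    (hpos : ∀ x : S, 0 ≤ Jstar U q g x)
    (μ : S → C → ℝ≥0∞) (hμ : IsPolicy U (toPolicy μ)) :
    (∀ x : S, Jpol q g (toPolicy μ) x = Jstar U q g x) ↔
      (∀ x : S, Jstar U q g x = Tmu q g μ (Jstar U q g) x) := by
  constructor
  · intro hopt x
    rw [← funext hopt]
    exact (Tmu_Jpol (Jminus_ne_top hGC hμ x)).symm
  · intro hfix x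
    set K := fun y => ePos (Jstar U q g y)
    have hK : ∀ y, meanCost μ (gPos g) y + nextExp q μ K y ≤ K y + meanCost μ (gNeg g) y := by
      intro y
      have hzero : nextExp q μ (fun y => ePos (-Jstar U q g y)) y = 0 := by
        simp only [ePos_neg (hpos _), nextExp_zero]
      refine le_add_of_signedSum_le ?_
      rw [← add_zero (meanCost μ (gNeg g) y), ← hzero, ← Tmu_eq, ← hfix y, coe_ePos (hpos y)]
    refine le_antisymm ?_ (iInf₂_le _ hμ)
    calc Jpol q g (toPolicy μ) x ≤ K x :=
          signedSum_le_of_le_add (Jminus_ne_top hGC hμ x) (tsum_costAt_le hK x)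
      _ = Jstar U q g x := coe_ePos (hpos x)

/-- if `J* ≥ 0`, a stationary policy `μ` is optimal iff
`J* = T_μ(J*)`. -/
theorem stationary_optimal_iff_fixed_point {S C : Type} [Countable S] [Countable C]
    (U : S → Set C) (q : S → C → S → ℝ≥0∞) (g : S → C → EReal)
    (hU : ∀ x, (U x).Nonempty)
    (hg : ∀ x, ∀ u ∈ U x, g x u ≠ ⊥)
    (hq : ∀ x, ∀ u ∈ U x, (∑' x' : S, q x u x') = 1)
    (hGC : GC U q g)
    (hpos : ∀ x : S, 0 ≤ Jstar U q g x)
    (μ : S → C → ℝ≥0∞) (hμ : IsPolicy U (toPolicy μ)) :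
    (∀ x : S, Jpol q g (toPolicy μ) x = Jstar U q g x) ↔
      (∀ x : S, Jstar U q g x = Tmu q g μ (Jstar U q g) x) :=
  stationary_optimal_iff_fixed_point_general U q g hGC hpos μ hμ

end GCMDP

end
end

section
/- For a given state x, if π is a policy with J_π(x) < +∞, then lim_{n→∞} E^π_x[J^{*+}(x_n)] = 0 and lim_{n→∞} E^π_x[J^{*-}(x_n)] = 0. -/
/-!
Common framework: countable-state/countable-control total-cost MDPs under the
General Convergence (GC) condition, following H. Yu, "On Convergence of Value
Iteration for a Class of Total Cost Markov Decision Processes".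

States `S` and controls `C` are countable types; `U x` is the nonempty set of
feasible controls at `x`; `g x u ∈ (-∞, +∞]` is the one-stage cost (an `EReal`
that is never `⊥` on feasible pairs); `q x u x'` are transition probabilities.

A policy is represented by its conditional control distributions given the
(reversed) history of past (state, control) pairs and the current state.
Expectations are computed by explicit countable sums, splitting every
extended-real quantity into its positive and negative parts (computed in
`ℝ≥0∞`) and recombining with the convention `∞ - ∞ = ∞`.
-/

open scoped ENNReal Classical
open Filter

noncomputable section

namespace GCMDP

variable {S C : Type}

/-!
Conditionally on the first `n` steps of a trajectory, the remainder of `π` is again an admissible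
policy (`π` shifted by the observed history) started at `x_n`, so `J^{*±}(x_n)` is at most its
expected cost. Hence `E^π_x[J^{*±}(x_n)]` is bounded by the expected tail cost
`E^π_x[∑_{k ≥ n} g_±(x_k, u_k)]`, which is the tail of the series `J_π^±(x)`. That series
converges: `J_π^+(x) < ∞` because `J_π(x) < ∞`, and `J_π^-(x) < ∞` by the GC condition.
-/

/-- The policy `π` continued after the reversed history `h₀` has been observed. -/
def shift (π : Policy S C) (h₀ : List (S × C)) : Policy S C := fun h x u => π (h ++ h₀) x u

lemma IsPolicy.shift {U : S → Set C} {π : Policy S C} (hπ : IsPolicy U π)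
    (h₀ : List (S × C)) : IsPolicy U (shift π h₀) := fun h x => hπ (h ++ h₀) x

lemma initOf_cons (w : S) (u : C) (h : List (S × C)) (y : S) :
    initOf ((w, u) :: h) y = initOf h w := by
  cases h with
  | nil => simp [initOf]
  | cons p t => simp [initOf, List.getLast?_eq_some_getLast]

lemma histProb_eq_zero_of_initOf_ne {q : S → C → S → ℝ≥0∞} {π : Policy S C} {x : S}
    (h : List (S × C)) (y : S) (hne : initOf h y ≠ x) : histProb q π x h y = 0 := by
  induction h generalizing y with
  | nil => simp_all [initOf, histProb]
  | cons p t ih =>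
    obtain ⟨w, u⟩ := p
    rw [initOf_cons] at hne
    simp [histProb, ih w hne]

lemma histProb_append (q : S → C → S → ℝ≥0∞) (π : Policy S C) (x : S)
    (h₁ h₀ : List (S × C)) (y : S) :
    histProb q π x (h₁ ++ h₀) y =
      histProb q π x h₀ (initOf h₁ y) * histProb q (shift π h₀) (initOf h₁ y) h₁ y := by
  induction h₁ generalizing y with
  | nil => simp [histProb, initOf]
  | cons p t ih =>
    obtain ⟨w, u⟩ := p
    rw [List.cons_append, initOf_cons]
    simp only [histProb, ih w, shift]
    ring

/-- Chapman–Kolmogorov equation for history probabilities. -/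
lemma tsum_histProb_mul_histProb_shift (q : S → C → S → ℝ≥0∞) (π : Policy S C) (x : S)
    (h₁ h₀ : List (S × C)) (y : S) :
    ∑' z : S, histProb q π x h₀ z * histProb q (shift π h₀) z h₁ y
      = histProb q π x (h₁ ++ h₀) y := by
  rw [histProb_append]
  refine tsum_eq_single (initOf h₁ y) fun z hz => ?_
  rw [histProb_eq_zero_of_initOf_ne h₁ y (Ne.symm hz), mul_zero]

def lengthAppendEquiv (α : Type*) (k n : ℕ) :
    {l : List α // l.length = k} × {l : List α // l.length = n} ≃
      {l : List α // l.length = k + n} where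
  toFun p := ⟨p.1.1 ++ p.2.1, by simp [p.1.2, p.2.2]⟩
  invFun l := (⟨l.1.take k, by simp [l.2]⟩, ⟨l.1.drop k, by simp [l.2]⟩)
  left_inv := by
    rintro ⟨⟨a, ha⟩, ⟨b, hb⟩⟩
    simp [List.take_left' ha, List.drop_left' ha]
  right_inv := by
    rintro ⟨l, hl⟩
    simp

variable (q : S → C → S → ℝ≥0∞) (π : Policy S C) (x : S) (f : S → C → ℝ≥0∞)

lemma costAt_eq_tsum_histProb (n : ℕ) :
    costAt q π x n f = ∑' (h : {l : List (S × C) // l.length = n}) (y : S) (u : C),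
      histProb q π x h.1 y * π h.1 y u * f y u := by
  simp only [costAt, saDist, ← ENNReal.tsum_mul_right]
  exact (tsum_congr fun _ => ENNReal.tsum_comm).trans ENNReal.tsum_comm

lemma tsum_histProb_mul_costAt_shift (h₀ : List (S × C)) (k : ℕ) :
    ∑' z : S, histProb q π x h₀ z * costAt q (shift π h₀) z k f
      = ∑' (h₁ : {l : List (S × C) // l.length = k}) (y : S) (u : C),
          histProb q π x (h₁.1 ++ h₀) y * π (h₁.1 ++ h₀) y u * f y u := by
  simp only [costAt_eq_tsum_histProb, ← ENNReal.tsum_mul_left]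
  rw [ENNReal.tsum_comm]
  refine tsum_congr fun h₁ => ?_
  rw [ENNReal.tsum_comm]
  refine tsum_congr fun y => ?_
  rw [ENNReal.tsum_comm]
  refine tsum_congr fun u => ?_
  rw [← tsum_histProb_mul_histProb_shift, ← ENNReal.tsum_mul_right, ← ENNReal.tsum_mul_right]
  exact tsum_congr fun z => by rw [shift]; ring

lemma costAt_add (k n : ℕ) :
    costAt q π x (k + n) f =
      ∑' (h₀ : {l : List (S × C) // l.length = n}) (z : S),
        histProb q π x h₀.1 z * costAt q (shift π h₀.1) z k f := by
  rw [costAt_eq_tsum_histProb, ← (lengthAppendEquiv (S × C) k n).tsum_eq, ENNReal.tsum_prod',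
    ENNReal.tsum_comm]
  simp only [tsum_histProb_mul_costAt_shift]
  rfl

lemma tsum_costAt_add (n : ℕ) :
    ∑' k : ℕ, costAt q π x (n + k) f =
      ∑' (h₀ : {l : List (S × C) // l.length = n}) (z : S),
        histProb q π x h₀.1 z * ∑' k : ℕ, costAt q (shift π h₀.1) z k f := by
  simp only [add_comm n, costAt_add, ENNReal.tsum_mul_left.symm]
  rw [ENNReal.tsum_comm]
  exact tsum_congr fun _ => ENNReal.tsum_comm

variable {U : S → Set C} {π}

lemma tsum_sDist_mul_le_tsum_costAt_add (hπ : IsPolicy U π) (J : S → ℝ≥0∞)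
    (hJ : ∀ π', IsPolicy U π' → ∀ z, J z ≤ ∑' k : ℕ, costAt q π' z k f) (n : ℕ) :
    ∑' y : S, sDist q π x n y * J y ≤ ∑' k : ℕ, costAt q π x (n + k) f := by
  rw [tsum_costAt_add]
  simp only [sDist, ← ENNReal.tsum_mul_right]
  rw [ENNReal.tsum_comm]
  exact ENNReal.tsum_le_tsum fun h₀ => ENNReal.tsum_le_tsum fun z =>
    mul_le_mul_right (hJ _ (hπ.shift h₀.1) z) _

lemma tendsto_tsum_sDist_mul_zero (hπ : IsPolicy U π) (J : S → ℝ≥0∞)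
    (hJ : ∀ π', IsPolicy U π' → ∀ z, J z ≤ ∑' k : ℕ, costAt q π' z k f)
    (hfin : ∑' k : ℕ, costAt q π x k f ≠ ⊤) :
    Tendsto (fun n => ∑' y : S, sDist q π x n y * J y) atTop (nhds 0) := by
  have htail : Tendsto (fun n => ∑' k : ℕ, costAt q π x (n + k) f) atTop (nhds 0) := by
    simpa only [add_comm] using ENNReal.tendsto_sum_nat_add (fun k => costAt q π x k f) hfin
  exact tendsto_of_tendsto_of_tendsto_of_le_of_le tendsto_const_nhds htail (fun _ => zero_le)
    (tsum_sDist_mul_le_tsum_costAt_add q x f hπ J hJ)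

theorem expected_optimal_parts_tendsto_zero_general {S C : Type}
    (U : S → Set C) (q : S → C → S → ℝ≥0∞) (g : S → C → EReal)
    (hGC : GC U q g)
    (x : S) (π : Policy S C) (hπ : IsPolicy U π) (hfin : Jpol q g π x < ⊤) :
    Filter.Tendsto (fun n : ℕ => ∑' y : S, sDist q π x n y * JstarPlus U q g y)
      Filter.atTop (nhds 0) ∧
    Filter.Tendsto (fun n : ℕ => ∑' y : S, sDist q π x n y * JstarMinus U q g y)
      Filter.atTop (nhds 0) := by
  have hplus : Jplus q g π x ≠ ⊤ := fun h => by
    simp [Jpol, signedSum, h] at hfin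
  have hminus : Jminus q g π x ≠ ⊤ :=
    ne_top_of_le_ne_top (hGC x) (le_biSup (fun π' => Jminus q g π' x) hπ)
  exact ⟨tendsto_tsum_sDist_mul_zero q x (gPos g) hπ _
      (fun π' hπ' z => biInf_le (fun π'' => Jplus q g π'' z) hπ') hplus,
    tendsto_tsum_sDist_mul_zero q x (gNeg g) hπ _
      (fun π' hπ' z => biInf_le (fun π'' => Jminus q g π'' z) hπ') hminus⟩

/-- if `J_π(x) < +∞`, then `E^π_x[J^{*+}(x_n)] → 0` and
`E^π_x[J^{*-}(x_n)] → 0`. -/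
theorem expected_optimal_parts_tendsto_zero {S C : Type} [Countable S] [Countable C]
    (U : S → Set C) (q : S → C → S → ℝ≥0∞) (g : S → C → EReal)
    (hU : ∀ x, (U x).Nonempty)
    (hg : ∀ x, ∀ u ∈ U x, g x u ≠ ⊥)
    (hq : ∀ x, ∀ u ∈ U x, (∑' x' : S, q x u x') = 1)
    (hGC : GC U q g)
    (x : S) (π : Policy S C) (hπ : IsPolicy U π) (hfin : Jpol q g π x < ⊤) :
    Filter.Tendsto (fun n : ℕ => ∑' y : S, sDist q π x n y * JstarPlus U q g y)
      Filter.atTop (nhds 0) ∧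
    Filter.Tendsto (fun n : ℕ => ∑' y : S, sDist q π x n y * JstarMinus U q g y)
      Filter.atTop (nhds 0) :=
  expected_optimal_parts_tendsto_zero_general U q g hGC x π hπ hfin

end GCMDP

end
end
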